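/- Fix d > 1 and 0 < λ < ∞, and let f_λ denote the unique fixed point of the truncated cavity operator T, extended to ℝ by 1 on (-∞,-λ] and 0 on (λ,∞). Then for all x ≥ 0, f_λ(x) · ln(1 / f_λ(x)) ≤ (1 + x^d / e) · exp(-x^d / e), where the left-hand side is interpreted as 0 when f_λ(x) ∈ {0, 1}. -/

import Mathlib

/-!
Write `f_λ = exp (-I)` with `I x = d ∫_{-x}^{λ} (x + y)^{d-1} f_λ(y) dy`. Splitting the integral
at `0` and using monotonicity gives `I x ≥ f_λ(0) x^d + I 0`, i.e. `f_λ(x) ≤ f_λ(0) e^{-f_λ(0) x^d}`.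
Integrating this bound against `d y^{d-1}` over `[0, λ]` gives `I 0 ≤ 1 - e^{-f_λ(0) λ^d} ≤ 1`, so
`f_λ(0) = e^{-I 0} ≥ 1/e` and hence `I x ≥ x^d / e`. Finally `t ↦ t e^{-t}` is bounded by
`(1 + a) e^{-a}` on `[a, ∞)`, and `f_λ(x) ln (1 / f_λ(x)) = I x · e^{-I x}`.
-/

open MeasureTheory Set

/-- The truncated cavity operator `T`. -/
noncomputable def T (d lam : ℝ) (f : ℝ → ℝ) : ℝ → ℝ :=
  fun x => Real.exp (-(d * ∫ y in (-x)..lam, (x + y) ^ (d - 1) * f y))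

/-- `f` is the fixed point of the truncated cavity operator on `[-λ, λ]`
(non-increasing and `[0,1]`-valued there), extended to `ℝ` by `1` on `(-∞, -λ]`
and `0` on `(λ, ∞)`. -/
def ExtFixedPoint (d lam : ℝ) (f : ℝ → ℝ) : Prop :=
  AntitoneOn f (Icc (-lam) lam) ∧
  (∀ x ∈ Icc (-lam) lam, f x ∈ Icc (0 : ℝ) 1) ∧
  (∀ x ≤ -lam, f x = 1) ∧ (∀ x > lam, f x = 0) ∧
  (∀ x ∈ Icc (-lam) lam, T d lam f x = f x)

open Real intervalIntegral

theorem exp_neg_mul_le_one_add_mul_exp_neg {a t : ℝ} (ha : 0 ≤ a) (hat : a ≤ t) :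
    exp (-t) * t ≤ (1 + a) * exp (-a) := by
  have hlin : t ≤ (1 + a) * (t - a + 1) := by nlinarith
  calc exp (-t) * t ≤ exp (-t) * ((1 + a) * exp (t - a)) := by
        gcongr
        exact hlin.trans (by gcongr; exact add_one_le_exp _)
    _ = (1 + a) * exp (-a) := by rw [mul_left_comm, ← exp_add]; congr 2; ring

theorem integral_add_rpow_sub_one {d : ℝ} (hd : 0 < d) (x : ℝ) :
    ∫ y in (-x)..0, (x + y) ^ (d - 1) = x ^ d / d := by
  rw [integral_comp_add_left (fun u : ℝ => u ^ (d - 1)), add_neg_cancel, add_zero,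
    integral_rpow (Or.inl (by linarith)), sub_add_cancel, zero_rpow hd.ne', sub_zero]

theorem integral_rpow_sub_one_mul_exp_neg {d : ℝ} (hd : 1 ≤ d) (c b : ℝ) :
    ∫ y in (0 : ℝ)..b, d * y ^ (d - 1) * (c * exp (-(c * y ^ d))) = 1 - exp (-(c * b ^ d)) := by
  have hderiv : ∀ y ∈ uIcc (0 : ℝ) b, HasDerivAt (fun t : ℝ => -exp (-(c * t ^ d)))
      (d * y ^ (d - 1) * (c * exp (-(c * y ^ d)))) y := fun y _ => by
    refine ((((hasDerivAt_rpow_const (Or.inr hd)).const_mul c).neg).exp).neg.congr_deriv ?_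
    simp only [Pi.neg_apply]
    ring
  have hrpow := continuous_rpow_const (q := d - 1) (by linarith)
  have hrpow' := continuous_rpow_const (q := d) (by linarith)
  have hcont : Continuous fun y : ℝ => d * y ^ (d - 1) * (c * exp (-(c * y ^ d))) := by
    fun_prop
  rw [integral_eq_sub_of_hasDerivAt hderiv (hcont.intervalIntegrable _ _),
    zero_rpow (by linarith), mul_zero, neg_zero, exp_zero, sub_neg_eq_add, neg_add_eq_sub]

noncomputable def cavityIntegral (d lam : ℝ) (f : ℝ → ℝ) (x : ℝ) : ℝ :=
  d * ∫ y in (-x)..lam, (x + y) ^ (d - 1) * f y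

theorem continuous_add_rpow_sub_one {d : ℝ} (hd : 1 ≤ d) (x : ℝ) :
    Continuous fun y : ℝ => (x + y) ^ (d - 1) :=
  (continuous_const_add x).rpow_const fun _ => Or.inr (by linarith)

namespace ExtFixedPoint

variable {d lam : ℝ} {f : ℝ → ℝ}

theorem mem_Icc (hf : ExtFixedPoint d lam f) (x : ℝ) : f x ∈ Icc (0 : ℝ) 1 := by
  obtain ⟨-, hIcc, hlow, hhigh, -⟩ := hf
  rcases le_or_gt x (-lam) with hx | hx
  · simp [hlow x hx]
  rcases le_or_gt x lam with hx' | hx'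
  · exact hIcc x ⟨hx.le, hx'⟩
  · simp [hhigh x hx']

theorem antitone (hf : ExtFixedPoint d lam f) : Antitone f := by
  have h01 := hf.mem_Icc
  obtain ⟨hanti, -, hlow, hhigh, -⟩ := hf
  intro a b hab
  rcases le_or_gt b (-lam) with hb | hb
  · rw [hlow a (hab.trans hb), hlow b hb]
  rcases lt_or_ge lam b with hb' | hb'
  · rw [hhigh b hb']; exact (h01 a).1
  rcases le_or_gt a (-lam) with ha | ha
  · rw [hlow a ha]; exact (h01 b).2
  · exact hanti ⟨ha.le, hab.trans hb'⟩ ⟨hb.le, hb'⟩ hab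

theorem apply_eq_exp (hf : ExtFixedPoint d lam f) {x : ℝ} (hx : x ∈ Icc (-lam) lam) :
    f x = exp (-cavityIntegral d lam f x) :=
  (hf.2.2.2.2 x hx).symm

theorem intervalIntegrable_rpow_mul (hf : ExtFixedPoint d lam f) (hd : 1 ≤ d) (x a b : ℝ) :
    IntervalIntegrable (fun y => (x + y) ^ (d - 1) * f y) volume a b :=
  hf.antitone.intervalIntegrable.continuousOn_mul
    (continuous_add_rpow_sub_one hd x).continuousOn

theorem apply_zero_mul_rpow_add_le (hf : ExtFixedPoint d lam f) (hd : 1 ≤ d) (hlam : 0 ≤ lam)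
    {x : ℝ} (hx : 0 ≤ x) :
    f 0 * x ^ d + cavityIntegral d lam f 0 ≤ cavityIntegral d lam f x := by
  have hneg : f 0 * (x ^ d / d) ≤ ∫ y in (-x)..0, (x + y) ^ (d - 1) * f y := by
    rw [← integral_add_rpow_sub_one (by linarith), ← intervalIntegral.integral_const_mul]
    refine integral_mono_on (by linarith)
      ((continuous_const.mul (continuous_add_rpow_sub_one hd x)).intervalIntegrable _ _)
      (hf.intervalIntegrable_rpow_mul hd _ _ _) fun y hy => ?_
    rw [mul_comm]
    exact mul_le_mul_of_nonneg_left (hf.antitone hy.2) (rpow_nonneg (by linarith [hy.1]) _)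
  have hpos : ∫ y in (0 : ℝ)..lam, y ^ (d - 1) * f y
      ≤ ∫ y in (0 : ℝ)..lam, (x + y) ^ (d - 1) * f y := by
    refine integral_mono_on hlam (by simpa using hf.intervalIntegrable_rpow_mul hd 0 0 lam)
      (hf.intervalIntegrable_rpow_mul hd _ _ _) fun y hy => ?_
    exact mul_le_mul_of_nonneg_right (rpow_le_rpow hy.1 (by linarith) (by linarith))
      (hf.mem_Icc y).1
  rw [cavityIntegral, cavityIntegral, ← integral_add_adjacent_intervals
    (hf.intervalIntegrable_rpow_mul hd x _ 0) (hf.intervalIntegrable_rpow_mul hd _ 0 _)]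
  simp only [neg_zero, zero_add, mul_add]
  have hd0 : 0 < d := by linarith
  calc f 0 * x ^ d + d * ∫ y in (0 : ℝ)..lam, y ^ (d - 1) * f y
      = d * (f 0 * (x ^ d / d)) + d * ∫ y in (0 : ℝ)..lam, y ^ (d - 1) * f y := by field_simp
    _ ≤ _ := add_le_add (mul_le_mul_of_nonneg_left hneg hd0.le)
      (mul_le_mul_of_nonneg_left hpos hd0.le)

theorem apply_le_apply_zero_mul_exp (hf : ExtFixedPoint d lam f) (hd : 1 ≤ d) {x : ℝ}
    (hx : 0 ≤ x) (hxl : x ≤ lam) : f x ≤ f 0 * exp (-(f 0 * x ^ d)) := by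
  have hle := hf.apply_zero_mul_rpow_add_le hd (hx.trans hxl) hx
  rw [hf.apply_eq_exp ⟨by linarith, hxl⟩]
  nth_rewrite 1 [hf.apply_eq_exp (x := 0) ⟨by linarith, hx.trans hxl⟩]
  rw [← exp_add, exp_le_exp]
  linarith

theorem cavityIntegral_zero_le_one (hf : ExtFixedPoint d lam f) (hd : 1 ≤ d) (hlam : 0 ≤ lam) :
    cavityIntegral d lam f 0 ≤ 1 := by
  have hrpow := continuous_rpow_const (q := d - 1) (by linarith)
  have hrpow' := continuous_rpow_const (q := d) (by linarith)
  have hcont : Continuous fun y : ℝ => d * y ^ (d - 1) := by fun_prop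
  have hbound : Continuous fun y : ℝ => d * y ^ (d - 1) * (f 0 * exp (-(f 0 * y ^ d))) := by
    fun_prop
  calc cavityIntegral d lam f 0 = ∫ y in (0 : ℝ)..lam, d * y ^ (d - 1) * f y := by
        simp only [cavityIntegral, neg_zero, zero_add, ← intervalIntegral.integral_const_mul,
          mul_assoc]
    _ ≤ ∫ y in (0 : ℝ)..lam, d * y ^ (d - 1) * (f 0 * exp (-(f 0 * y ^ d))) := by
        refine integral_mono_on hlam
          (hf.antitone.intervalIntegrable.continuousOn_mul hcont.continuousOn)
          (hbound.intervalIntegrable _ _) fun y hy => ?_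
        exact mul_le_mul_of_nonneg_left (hf.apply_le_apply_zero_mul_exp hd hy.1 hy.2)
          (mul_nonneg (by linarith) (rpow_nonneg hy.1 _))
    _ = 1 - exp (-(f 0 * lam ^ d)) := integral_rpow_sub_one_mul_exp_neg hd _ _
    _ ≤ 1 := by linarith [exp_pos (-(f 0 * lam ^ d))]

theorem rpow_div_exp_one_le_cavityIntegral (hf : ExtFixedPoint d lam f) (hd : 1 ≤ d) {x : ℝ}
    (hx : 0 ≤ x) (hxl : x ≤ lam) : x ^ d / exp 1 ≤ cavityIntegral d lam f x := by
  have hlam : 0 ≤ lam := hx.trans hxl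
  have hf0 : exp (-1) ≤ f 0 := by
    rw [hf.apply_eq_exp ⟨by linarith, hlam⟩, exp_le_exp, neg_le_neg_iff]
    exact hf.cavityIntegral_zero_le_one hd hlam
  have hI0 : 0 ≤ cavityIntegral d lam f 0 :=
    mul_nonneg (by linarith) (integral_nonneg (by simpa using hlam) fun y hy =>
      mul_nonneg (rpow_nonneg (by simpa using hy.1) _) (hf.mem_Icc y).1)
  calc x ^ d / exp 1 = exp (-1) * x ^ d := by rw [exp_neg, div_eq_inv_mul]
    _ ≤ f 0 * x ^ d := by gcongr
    _ ≤ cavityIntegral d lam f x := by linarith [hf.apply_zero_mul_rpow_add_le hd hlam hx]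

end ExtFixedPoint

theorem fixedPoint_entropy_bound_pos_general (d lam : ℝ) (hd : 1 < d)
    (flam : ℝ → ℝ) (hflam : ExtFixedPoint d lam flam) :
    ∀ x : ℝ, 0 ≤ x →
      flam x * Real.log (1 / flam x) ≤
        (1 + x ^ d / Real.exp 1) * Real.exp (-(x ^ d / Real.exp 1)) := by
  intro x hx
  rcases lt_or_ge lam x with hxl | hxl
  · rw [hflam.2.2.2.1 x hxl, zero_mul]
    positivity
  · rw [hflam.apply_eq_exp ⟨by linarith, hxl⟩, one_div, ← exp_neg, neg_neg, log_exp]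
    exact exp_neg_mul_le_one_add_mul_exp_neg (by positivity)
      (hflam.rpow_div_exp_one_le_cavityIntegral hd.le hx hxl)

/-- for all `x ≥ 0`, `f_λ(x) ln(1/f_λ(x)) ≤ (1 + x^d/e) exp(-x^d / e)`.
(In Lean, `Real.log (1/u) = 0` when `u = 0` or `u = 1`, matching the convention.) -/
theorem fixedPoint_entropy_bound_pos (d lam : ℝ) (hd : 1 < d) (hlam : 0 < lam)
    (flam : ℝ → ℝ) (hflam : ExtFixedPoint d lam flam) :
    ∀ x : ℝ, 0 ≤ x →
      flam x * Real.log (1 / flam x) ≤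
        (1 + x ^ d / Real.exp 1) * Real.exp (-(x ^ d / Real.exp 1)) :=
  fixedPoint_entropy_bound_pos_general d lam hd flam hflam
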